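/- Let Λ ⊂ ℤ \ {0} be quasi-independent. Then for any finitely supported complex sequence (xₙ)_{n∈Λ}, ∫₀^{2π} exp(Re(Σ_{n∈Λ} xₙ e^{int})/2) dt/(2π) ≤ exp(Σ|xₙ|²/2); i.e., the character system {e^{int} : n ∈ Λ} is subgaussian with constant at most 2. -/

import Mathlib

/-!
For `|u| ≤ r`, convexity of `exp` on `[-r, r]` gives `exp u ≤ cosh r + u sinh r / r`. Applied to
`u = Re(xₙ e^{int})/2` and `r = |xₙ|/2`, this dominates the integrand by a Riesz product
`∏ₙ (cosh(|xₙ|/2) + Re(wₙ e^{int}))` with `wₙ = sinh(|xₙ|/2) xₙ / |xₙ|`. Expanding the product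
as a sum of characters `e^{i(Σ εₙ n)t}` with `εₙ ∈ {-1, 0, 1}`, quasi-independence says that only
the constant term has frequency zero, so the Riesz product has mean
`∏ cosh(|xₙ|/2) ≤ exp(Σ |xₙ|²/8)`.
-/

/-- A set `Λ ⊆ ℤ` is quasi-independent if the only relation
`∑ ξ_n · n = 0` with coefficients `ξ_n ∈ {-1,0,1}` supported on a finite
subset of `Λ` is the trivial one. -/
def QuasiIndependent (Λ : Set ℤ) : Prop :=
  ∀ F : Finset ℤ, ↑F ⊆ Λ → ∀ ξ : ℤ → ℤ,
    (∀ n, ξ n ∈ ({-1, 0, 1} : Set ℤ)) →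
    ∑ n ∈ F, ξ n * n = 0 → ∀ n ∈ F, ξ n = 0

namespace Real

theorem exp_le_cosh_add_mul_sinh_div {u r : ℝ} (hu : |u| ≤ r) :
    exp u ≤ cosh r + u * (sinh r / r) := by
  rcases ((abs_nonneg u).trans hu).eq_or_lt with rfl | hr
  · simp [abs_nonpos_iff.mp hu]
  obtain ⟨hlo, hhi⟩ := abs_le.mp hu
  have ha : 0 ≤ (1 - u / r) / 2 := by
    have := (div_le_one hr).mpr hhi; linarith
  have hb : 0 ≤ (1 + u / r) / 2 := by
    have := (le_div_iff₀ hr).mpr (by linarith : -1 * r ≤ u); linarith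
  calc exp u = exp ((1 - u / r) / 2 * -r + (1 + u / r) / 2 * r) := by
        congr 1; field_simp; ring
    _ ≤ (1 - u / r) / 2 * exp (-r) + (1 + u / r) / 2 * exp r :=
        convexOn_exp.2 (Set.mem_univ _) (Set.mem_univ _) ha hb (by ring)
    _ = cosh r + u * (sinh r / r) := by
        rw [cosh_eq, sinh_eq]; field_simp; ring

end Real

theorem Complex.exp_re_half_le (z : ℂ) :
    Real.exp (z.re / 2) ≤ Real.cosh (‖z‖ / 2) + ((Real.sinh (‖z‖ / 2) / ‖z‖ : ℝ) * z).re := by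
  rw [Complex.re_ofReal_mul]
  refine (Real.exp_le_cosh_add_mul_sinh_div (r := ‖z‖ / 2) ?_).trans_eq (by ring)
  rw [abs_div, abs_two]
  exact div_le_div_of_nonneg_right (Complex.abs_re_le_norm z) zero_le_two

theorem Complex.norm_mul_exp_I_int_mul (w : ℂ) (n : ℤ) (t : ℝ) :
    ‖w * Complex.exp (Complex.I * n * t)‖ = ‖w‖ := by
  simp [Complex.norm_exp]

theorem Complex.integral_exp_I_int_mul (M : ℤ) :
    ∫ t in (0 : ℝ)..(2 * Real.pi), Complex.exp (Complex.I * M * t)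
      = if M = 0 then (2 * Real.pi : ℂ) else 0 := by
  split_ifs with hM
  · simp [hM]
  have hc : Complex.I * M ≠ 0 := mul_ne_zero Complex.I_ne_zero (Int.cast_ne_zero.mpr hM)
  have hperiod : Complex.exp (Complex.I * M * ↑(2 * Real.pi)) = 1 := by
    rw [← Complex.exp_int_mul_two_pi_mul_I M]; push_cast; ring_nf
  rw [integral_exp_mul_complex hc, hperiod]
  simp

theorem Finset.prod_sum_mul_exp_eq_sum_pi (F S : Finset ℤ) (c : ℤ → ℤ → ℂ) (t : ℝ) :
    ∏ n ∈ F, ∑ e ∈ S, c n e * Complex.exp (Complex.I * ↑(e * n) * t)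
      = ∑ p ∈ F.pi fun _ => S, (∏ n ∈ F.attach, c n (p n n.2)) *
          Complex.exp (Complex.I * ↑(∑ n ∈ F.attach, p n n.2 * n) * t) := by
  rw [Finset.prod_sum]
  refine Finset.sum_congr rfl fun p _ => ?_
  rw [Finset.prod_mul_distrib, ← Complex.exp_sum]
  push_cast
  rw [Finset.mul_sum, Finset.sum_mul]

theorem Complex.ofReal_add_re_mul_exp_eq_sum (a : ℝ) (w : ℂ) (n : ℤ) (t : ℝ) :
    ((a + (w * Complex.exp (Complex.I * n * t)).re : ℝ) : ℂ)
      = ∑ e ∈ ({-1, 0, 1} : Finset ℤ),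
          (if e = 0 then (a : ℂ) else if e = 1 then w / 2 else (starRingEnd ℂ) w / 2) *
            Complex.exp (Complex.I * ↑(e * n) * t) := by
  have hconj : (starRingEnd ℂ) (w * Complex.exp (Complex.I * n * t))
      = (starRingEnd ℂ) w * Complex.exp (Complex.I * ↑(-1 * n) * t) := by
    rw [map_mul, ← Complex.exp_conj]
    push_cast
    simp [Complex.conj_I]
  rw [Complex.ofReal_add, Complex.re_eq_add_conj, hconj]
  rw [Finset.sum_insert (by decide), Finset.sum_insert (by decide), Finset.sum_singleton]
  simp only [if_pos, if_neg, show (-1 : ℤ) ≠ 0 by decide, show (-1 : ℤ) ≠ 1 by decide,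
    one_ne_zero, not_false_eq_true, zero_mul, Int.cast_zero, mul_zero, Complex.exp_zero, one_mul]
  ring

theorem QuasiIndependent.eq_zero_of_sum_mul_eq_zero {Λ : Set ℤ} (hqi : QuasiIndependent Λ)
    {F : Finset ℤ} (hF : ↑F ⊆ Λ) {p : ∀ n ∈ F, ℤ} (hp : p ∈ F.pi fun _ => {-1, 0, 1})
    (hsum : ∑ n ∈ F.attach, p n n.2 * n = 0) : p = fun _ _ => 0 := by
  let ξ : ℤ → ℤ := fun n => if h : n ∈ F then p n h else 0
  have hξ : ∀ n, ξ n ∈ ({-1, 0, 1} : Set ℤ) := by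
    intro n
    by_cases h : n ∈ F
    · simpa [ξ, h] using Finset.mem_pi.mp hp n h
    · simp [ξ, h]
  have hξsum : ∑ n ∈ F, ξ n * n = 0 := by
    rw [← Finset.sum_attach, ← hsum]
    exact Finset.sum_congr rfl fun n _ => by simp [ξ, n.2]
  funext n hn
  simpa [ξ, hn] using hqi F hF ξ hξ hξsum n hn

theorem QuasiIndependent.integral_prod_sum_mul_exp {Λ : Set ℤ} (hqi : QuasiIndependent Λ)
    {F : Finset ℤ} (hF : ↑F ⊆ Λ) (c : ℤ → ℤ → ℂ) :
    ∫ t in (0 : ℝ)..(2 * Real.pi),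
        ∏ n ∈ F, ∑ e ∈ ({-1, 0, 1} : Finset ℤ), c n e * Complex.exp (Complex.I * ↑(e * n) * t)
      = 2 * Real.pi * ∏ n ∈ F, c n 0 := by
  simp_rw [Finset.prod_sum_mul_exp_eq_sum_pi]
  rw [intervalIntegral.integral_finsetSum fun p _ => by
    apply Continuous.intervalIntegrable; fun_prop]
  simp_rw [intervalIntegral.integral_const_mul, Complex.integral_exp_I_int_mul]
  rw [Finset.sum_eq_single_of_mem (fun _ _ => 0) (by simp [Finset.mem_pi])]
  · simp [Finset.prod_attach F (fun n => c n 0), mul_comm]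
  · intro p hp hne
    rw [if_neg (mt (hqi.eq_zero_of_sum_mul_eq_zero hF hp) hne), mul_zero]

theorem QuasiIndependent.integral_prod_add_re_mul_exp {Λ : Set ℤ} (hqi : QuasiIndependent Λ)
    {F : Finset ℤ} (hF : ↑F ⊆ Λ) (a : ℤ → ℝ) (w : ℤ → ℂ) :
    ∫ t in (0 : ℝ)..(2 * Real.pi), ∏ n ∈ F, (a n + (w n * Complex.exp (Complex.I * n * t)).re)
      = 2 * Real.pi * ∏ n ∈ F, a n := by
  apply Complex.ofReal_injective
  rw [← intervalIntegral.integral_ofReal]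
  simp_rw [Complex.ofReal_prod, Complex.ofReal_add_re_mul_exp_eq_sum]
  rw [hqi.integral_prod_sum_mul_exp hF]
  push_cast
  simp

theorem quasiindependent_subgaussian_general
    (Λ : Set ℤ) (hqi : QuasiIndependent Λ) :
    ∀ F : Finset ℤ, ↑F ⊆ Λ → ∀ x : ℤ → ℂ,
      (2 * Real.pi)⁻¹ *
          ∫ t in (0 : ℝ)..(2 * Real.pi),
            Real.exp ((∑ n ∈ F, x n * Complex.exp (Complex.I * n * t)).re / 2)
        ≤ Real.exp (∑ n ∈ F, ‖x n‖ ^ 2 / 2) := by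
  intro F hF x
  set w : ℤ → ℂ := fun n => (Real.sinh (‖x n‖ / 2) / ‖x n‖ : ℝ) * x n
  have hpointwise : ∀ t : ℝ,
      Real.exp ((∑ n ∈ F, x n * Complex.exp (Complex.I * n * t)).re / 2)
        ≤ ∏ n ∈ F, (Real.cosh (‖x n‖ / 2) + (w n * Complex.exp (Complex.I * n * t)).re) := by
    intro t
    rw [Complex.re_sum, Finset.sum_div, Real.exp_sum]
    refine Finset.prod_le_prod (fun n _ => (Real.exp_pos _).le) fun n _ => ?_
    have := Complex.exp_re_half_le (x n * Complex.exp (Complex.I * n * t))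
    rwa [Complex.norm_mul_exp_I_int_mul, ← mul_assoc] at this
  have h2pi : 0 < 2 * Real.pi := Real.two_pi_pos
  calc (2 * Real.pi)⁻¹ * ∫ t in (0 : ℝ)..(2 * Real.pi),
          Real.exp ((∑ n ∈ F, x n * Complex.exp (Complex.I * n * t)).re / 2)
      ≤ (2 * Real.pi)⁻¹ * ∫ t in (0 : ℝ)..(2 * Real.pi),
          ∏ n ∈ F, (Real.cosh (‖x n‖ / 2) + (w n * Complex.exp (Complex.I * n * t)).re) := by
        gcongr
        exact intervalIntegral.integral_mono_on h2pi.le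
          (by apply Continuous.intervalIntegrable; fun_prop)
          (by apply Continuous.intervalIntegrable; fun_prop) fun t _ => hpointwise t
    _ = ∏ n ∈ F, Real.cosh (‖x n‖ / 2) := by
        rw [hqi.integral_prod_add_re_mul_exp hF, inv_mul_cancel_left₀ h2pi.ne']
    _ ≤ ∏ n ∈ F, Real.exp (‖x n‖ ^ 2 / 2) := by
        refine Finset.prod_le_prod (fun n _ => (Real.cosh_pos _).le) fun n _ => ?_
        refine (Real.cosh_le_exp_half_sq _).trans (Real.exp_le_exp.2 ?_)
        nlinarith [sq_nonneg ‖x n‖]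
    _ = Real.exp (∑ n ∈ F, ‖x n‖ ^ 2 / 2) := (Real.exp_sum _ _).symm

theorem quasiindependent_subgaussian
    (Λ : Set ℤ) (h0 : (0 : ℤ) ∉ Λ) (hqi : QuasiIndependent Λ) :
    ∀ F : Finset ℤ, ↑F ⊆ Λ → ∀ x : ℤ → ℂ,
      (2 * Real.pi)⁻¹ *
          ∫ t in (0 : ℝ)..(2 * Real.pi),
            Real.exp ((∑ n ∈ F, x n * Complex.exp (Complex.I * n * t)).re / 2)
        ≤ Real.exp (∑ n ∈ F, ‖x n‖ ^ 2 / 2) :=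
  quasiindependent_subgaussian_general Λ hqi
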